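/- Define G(α) for positive reals n, T, c, σ with D := T − 2n > 0 by G(α) = (4α/√T)·(4α²T/(D·n) − 1 − c·16α²Tn/(σ²D)) − exp(T/(8α²))·(4α²/T·(T/n + 1) − 1)·√(2π)·Erfc(√(T/(8α²))). If n·T ≥ σ²/c and T > 2σ/√c and σ² − 4c·n² > 0, then there exists α ≥ √n with G(α) = 0. -/

import Mathlib

open Real MeasureTheory

noncomputable def Erfc (x : ℝ) : ℝ :=
  (2 / Real.sqrt Real.pi) * ∫ s in Set.Ioi x, Real.exp (-s ^ 2)

noncomputable def G (n T c σ α : ℝ) : ℝ :=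
  (4 * α / Real.sqrt T) *
      (4 * α ^ 2 * T / ((T - 2 * n) * n) - 1 -
        c * (16 * α ^ 2 * T * n) / (σ ^ 2 * (T - 2 * n))) -
    Real.exp (T / (8 * α ^ 2)) *
      (4 * α ^ 2 / T * (T / n + 1) - 1) * Real.sqrt (2 * Real.pi) *
      Erfc (Real.sqrt (T / (8 * α ^ 2)))


lemma integrable_expsq : Integrable (fun s : ℝ => Real.exp (-s ^ 2)) := by
  have h := integrable_exp_neg_mul_sq (b := (1:ℝ)) one_pos
  simpa using h

lemma erfc_eq (x : ℝ) : Erfc x = (2 / Real.sqrt Real.pi) *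
    ((∫ s : ℝ, Real.exp (-s ^ 2)) - (∫ s in Set.Iic (0:ℝ), Real.exp (-s ^ 2))
      - ∫ s in (0:ℝ)..x, Real.exp (-s ^ 2)) := by
  have h1 := intervalIntegral.integral_Iic_add_Ioi (b := x) (μ := volume)
    (integrable_expsq.integrableOn) (integrable_expsq.integrableOn)
  have h2 := intervalIntegral.integral_Iic_sub_Iic (a := (0:ℝ)) (b := x) (μ := volume)
    (integrable_expsq.integrableOn) (integrable_expsq.integrableOn)
  have h3 : (∫ s in Set.Ioi x, Real.exp (-s ^ 2)) =
      (∫ s : ℝ, Real.exp (-s ^ 2)) - (∫ s in Set.Iic (0:ℝ), Real.exp (-s ^ 2))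
        - ∫ s in (0:ℝ)..x, Real.exp (-s ^ 2) := by linarith
  rw [Erfc, h3]

lemma erfc_continuous : Continuous Erfc := by
  have hprim : Continuous fun x : ℝ => ∫ s in (0:ℝ)..x, Real.exp (-s ^ 2) :=
    integrable_expsq.continuous_primitive 0
  have h : Erfc = fun x => (2 / Real.sqrt Real.pi) *
      ((∫ s : ℝ, Real.exp (-s ^ 2)) - (∫ s in Set.Iic (0:ℝ), Real.exp (-s ^ 2))
        - ∫ s in (0:ℝ)..x, Real.exp (-s ^ 2)) := funext erfc_eq
  rw [h]
  exact continuous_const.mul ((continuous_const.sub hprim))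

lemma erfc_nonneg (x : ℝ) : 0 ≤ Erfc x := by
  unfold Erfc
  apply mul_nonneg (by positivity)
  exact MeasureTheory.setIntegral_nonneg measurableSet_Ioi (fun s _ => (Real.exp_pos _).le)

lemma erfc_le_one {x : ℝ} (hx : 0 ≤ x) : Erfc x ≤ 1 := by
  have hπ : 0 < Real.sqrt Real.pi := Real.sqrt_pos.mpr Real.pi_pos
  have h0 : (∫ s in Set.Ioi (0:ℝ), Real.exp (-s ^ 2)) = Real.sqrt Real.pi / 2 := by
    have h := integral_gaussian_Ioi 1
    simpa using h
  have hmono : (∫ s in Set.Ioi x, Real.exp (-s ^ 2)) ≤ ∫ s in Set.Ioi (0:ℝ), Real.exp (-s ^ 2) := by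
    apply MeasureTheory.setIntegral_mono_set integrable_expsq.integrableOn
    · exact Filter.Eventually.of_forall fun s => (Real.exp_pos _).le
    · exact (Set.Ioi_subset_Ioi hx).eventuallyLE
  unfold Erfc
  calc (2 / Real.sqrt Real.pi) * ∫ s in Set.Ioi x, Real.exp (-s ^ 2)
      ≤ (2 / Real.sqrt Real.pi) * (Real.sqrt Real.pi / 2) := by
        rw [← h0]; exact mul_le_mul_of_nonneg_left hmono (by positivity)
    _ = 1 := by field_simp

lemma erfc_integral_lb (x : ℝ) :
    Real.exp (-x ^ 2) * x / (2 * x ^ 2 + 1) ≤ ∫ s in Set.Ioi x, Real.exp (-s ^ 2) := by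
  set f : ℝ → ℝ := fun s => -(Real.exp (-s ^ 2) * s / (2 * s ^ 2 + 1)) with hf
  set g : ℝ → ℝ := fun s => Real.exp (-s ^ 2) * (4 * s ^ 4 + 4 * s ^ 2 - 1) / (2 * s ^ 2 + 1) ^ 2
    with hg
  have hden : ∀ s : ℝ, (2 * s ^ 2 + 1) ≠ 0 := fun s => by positivity
  have hderiv : ∀ s : ℝ, HasDerivAt f (g s) s := by
    intro s
    have h1 : HasDerivAt (fun s : ℝ => -s ^ 2) (-(2 * s)) s := by
      simpa using (hasDerivAt_pow 2 s).fun_neg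
    have h2 : HasDerivAt (fun s : ℝ => Real.exp (-s ^ 2)) (Real.exp (-s ^ 2) * (-(2 * s))) s :=
      h1.exp
    have h3 : HasDerivAt (fun s : ℝ => Real.exp (-s ^ 2) * s)
        (Real.exp (-s ^ 2) * (-(2 * s)) * s + Real.exp (-s ^ 2) * 1) s := h2.mul (hasDerivAt_id s)
    have h4 : HasDerivAt (fun s : ℝ => 2 * s ^ 2 + 1) (2 * (2 * s)) s := by
      have := ((hasDerivAt_pow 2 s).const_mul (2:ℝ)).add_const (1:ℝ)
      simpa using this
    have h5 := (h3.div h4 (hden s)).neg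
    refine h5.congr_deriv ?_
    rw [hg]
    field_simp
    ring
  have hcont : ContinuousWithinAt f (Set.Ici x) x := (hderiv x).continuousAt.continuousWithinAt
  have hgcont : Continuous g := by
    apply Continuous.div (by fun_prop) (by fun_prop)
    intro s; positivity
  have hgabs : ∀ s : ℝ, ‖g s‖ ≤ Real.exp (-s ^ 2) := by
    intro s
    have habs : |4 * s ^ 4 + 4 * s ^ 2 - 1| ≤ (2 * s ^ 2 + 1) ^ 2 := by
      rw [abs_le]; constructor <;> nlinarith [sq_nonneg s, sq_nonneg (s ^ 2)]
    have h6 : ‖g s‖ = Real.exp (-s ^ 2) * |4 * s ^ 4 + 4 * s ^ 2 - 1| / (2 * s ^ 2 + 1) ^ 2 := by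
      rw [hg, Real.norm_eq_abs, abs_div, abs_mul, abs_of_pos (Real.exp_pos _),
        abs_of_pos (by positivity : (0:ℝ) < (2 * s ^ 2 + 1) ^ 2)]
    rw [h6, div_le_iff₀ (by positivity)]
    nlinarith [mul_le_mul_of_nonneg_left habs (Real.exp_pos (-s ^ 2)).le]
  have hgle : ∀ s : ℝ, g s ≤ Real.exp (-s ^ 2) := fun s =>
    le_trans (le_abs_self _) (by simpa [Real.norm_eq_abs] using hgabs s)
  have hgint : MeasureTheory.IntegrableOn g (Set.Ioi x) := by
    apply MeasureTheory.Integrable.mono integrable_expsq.integrableOn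
      hgcont.aestronglyMeasurable.restrict
    apply Filter.Eventually.of_forall
    intro s
    simpa [Real.norm_eq_abs, abs_of_pos (Real.exp_pos (-s ^ 2))] using hgabs s
  have htend : Filter.Tendsto f Filter.atTop (nhds 0) := by
    apply squeeze_zero_norm (a := fun s : ℝ => Real.exp (-s ^ 2)) ?_ ?_
    · intro s
      have hs : |s| ≤ 2 * s ^ 2 + 1 := by
        nlinarith [sq_abs s, abs_nonneg s, sq_nonneg (|s| - 1)]
      have h6 : ‖f s‖ = Real.exp (-s ^ 2) * |s| / (2 * s ^ 2 + 1) := by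
        rw [hf, norm_neg, Real.norm_eq_abs, abs_div, abs_mul, abs_of_pos (Real.exp_pos _),
          abs_of_pos (by positivity : (0:ℝ) < 2 * s ^ 2 + 1)]
      rw [h6, div_le_iff₀ (by positivity)]
      nlinarith [mul_le_mul_of_nonneg_left hs (Real.exp_pos (-s ^ 2)).le]
    · have h1 : Filter.Tendsto (fun s : ℝ => -s ^ 2) Filter.atTop Filter.atBot := by
        have h2 : Filter.Tendsto (fun s : ℝ => s ^ 2) Filter.atTop Filter.atTop :=
          Filter.tendsto_pow_atTop two_ne_zero
        exact Filter.tendsto_neg_atBot_iff.mpr h2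
      exact Real.tendsto_exp_atBot.comp h1
  have hkey : (∫ s in Set.Ioi x, g s) = 0 - f x :=
    MeasureTheory.integral_Ioi_of_hasDerivAt_of_tendsto hcont (fun s _ => hderiv s) hgint htend
  have hmono : (∫ s in Set.Ioi x, g s) ≤ ∫ s in Set.Ioi x, Real.exp (-s ^ 2) :=
    MeasureTheory.setIntegral_mono_on hgint integrable_expsq.integrableOn measurableSet_Ioi
      (fun s _ => hgle s)
  rw [hkey] at hmono
  calc Real.exp (-x ^ 2) * x / (2 * x ^ 2 + 1) = 0 - f x := by rw [hf]; ring
    _ ≤ _ := hmono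

lemma aux_step2 (n T u x : ℝ) (hn : 0 < n) (hT : 0 < T) (hupos : 0 < u) (hxpos : 0 < x)
    (hD : 0 < T - 2 * n) (h8T : 8 * n * x ^ 2 = T)
    (hs2 : Real.sqrt 2 ^ 2 = 2) (hveq : Real.sqrt T = 2 * Real.sqrt 2 * u * x) :
    4 * u / Real.sqrt T * ((3 * T - 14 * n) / (T - 2 * n)) ≤
      (3 + 4 * n / T) * (2 * Real.sqrt 2) * x / (2 * x ^ 2 + 1) := by
  have hv : 0 < Real.sqrt T := Real.sqrt_pos.mpr hT
  have lhs_eq : 4 * u / Real.sqrt T * ((3 * T - 14 * n) / (T - 2 * n)) =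
      4 * u * (3 * T - 14 * n) / (Real.sqrt T * (T - 2 * n)) := by
    rw [div_mul_div_comm]
  have rhs_eq : (3 + 4 * n / T) * (2 * Real.sqrt 2) * x / (2 * x ^ 2 + 1) =
      (3 * T + 4 * n) * (2 * Real.sqrt 2) * x / (T * (2 * x ^ 2 + 1)) := by
    rw [div_eq_div_iff (by positivity) (by positivity)]
    field_simp
  rw [lhs_eq, rhs_eq, div_le_div_iff₀ (by positivity) (by positivity), hveq]
  calc 4 * u * (3 * T - 14 * n) * (T * (2 * x ^ 2 + 1))
      ≤ 8 * u * x ^ 2 * (3 * T + 4 * n) * (T - 2 * n) := by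
        rw [← h8T]
        nlinarith [mul_pos (mul_pos (mul_pos hn hn) hupos) (mul_pos hxpos hxpos)]
    _ = (3 * T + 4 * n) * (2 * Real.sqrt 2) * x * (2 * Real.sqrt 2 * u * x * (T - 2 * n)) := by
        linear_combination (-(4 * u * x ^ 2 * (3 * T + 4 * n) * (T - 2 * n))) * hs2

lemma aux_growth (P Q R0 a : ℝ) (hP : 0 < P) (hQ : 0 < Q) (hR : 0 < R0)
    (h1 : 1 ≤ a) (hbig : Q + R0 + P ≤ P * a) : 0 ≤ P * a ^ 3 - Q * a - R0 * a ^ 2 := by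
  nlinarith [mul_le_mul_of_nonneg_right hbig (sq_nonneg a), sq_nonneg a,
    mul_pos hP (lt_of_lt_of_le one_pos h1)]

lemma aux_K (n T c σ : ℝ) (hn : 0 < n) (hT : 0 < T) (hc : 0 < c) (hσ : 0 < σ)
    (hD : 0 < T - 2 * n) (h3 : 0 < σ ^ 2 - 4 * c * n ^ 2) :
    0 < 4 * T / ((T - 2 * n) * n) - c * (16 * T * n) / (σ ^ 2 * (T - 2 * n)) := by
  rw [sub_pos, div_lt_div_iff₀ (by positivity) (by positivity)]
  nlinarith [mul_pos (mul_pos hT hD) h3, mul_pos hT hD, sq_nonneg σ]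

lemma aux_step1 (n T c σ : ℝ) (hn : 0 < n) (hT : 0 < T) (hc : 0 < c) (hσ : 0 < σ)
    (hD : 0 < T - 2 * n) (hc1 : σ ^ 2 ≤ c * (n * T)) :
    4 * n * T / ((T - 2 * n) * n) - 1 - c * (16 * n * T * n) / (σ ^ 2 * (T - 2 * n))
      ≤ (3 * T - 14 * n) / (T - 2 * n) := by
  have e1 : 4 * n * T / ((T - 2 * n) * n) = 4 * T / (T - 2 * n) := by
    rw [div_eq_div_iff (by positivity) (by positivity)]; ring
  have e2 : 16 * n / (T - 2 * n) ≤ c * (16 * n * T * n) / (σ ^ 2 * (T - 2 * n)) := by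
    rw [div_le_div_iff₀ (by positivity) (by positivity)]
    nlinarith [mul_le_mul_of_nonneg_left hc1 (by positivity : (0:ℝ) ≤ 16 * n * (T - 2 * n))]
  have e3 : 4 * T / (T - 2 * n) - 16 * n / (T - 2 * n) - 1 = (3 * T - 14 * n) / (T - 2 * n) := by
    field_simp; ring
  rw [e1]; linarith

set_option maxHeartbeats 1000000 in
theorem stmt_15 (n T c σ : ℝ) (hn : 0 < n) (hT : 0 < T) (hc : 0 < c) (hσ : 0 < σ)
    (hD : 0 < T - 2 * n)
    (h1 : n * T ≥ σ ^ 2 / c) (h2 : T > 2 * σ / Real.sqrt c)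
    (h3 : 0 < σ ^ 2 - 4 * c * n ^ 2) :
    ∃ α : ℝ, Real.sqrt n ≤ α ∧ G n T c σ α = 0 := by
  have hπ : 0 < Real.sqrt Real.pi := Real.sqrt_pos.mpr Real.pi_pos
  have hv : 0 < Real.sqrt T := Real.sqrt_pos.mpr hT
  have hvsq : Real.sqrt T ^ 2 = T := Real.sq_sqrt hT.le
  have hun : Real.sqrt n ^ 2 = n := Real.sq_sqrt hn.le
  have hupos : 0 < Real.sqrt n := Real.sqrt_pos.mpr hn
  have hs2 : Real.sqrt 2 ^ 2 = 2 := Real.sq_sqrt (by norm_num)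
  have hs2pos : 0 < Real.sqrt 2 := Real.sqrt_pos.mpr (by norm_num)
  set u := Real.sqrt n with hudef
  set x := Real.sqrt (T / (8 * n)) with hxdef
  have hx2 : x ^ 2 = T / (8 * n) := Real.sq_sqrt (by positivity)
  have hxpos : 0 < x := Real.sqrt_pos.mpr (by positivity)
  clear_value u x
  have h8T : 8 * n * x ^ 2 = T := by rw [hx2]; field_simp
  have hveq : Real.sqrt T = 2 * Real.sqrt 2 * u * x := by
    have e : (2 * Real.sqrt 2 * u * x) ^ 2 = T := by
      have : (2 * Real.sqrt 2 * u * x) ^ 2 = 4 * (Real.sqrt 2 ^ 2) * u ^ 2 * x ^ 2 := by ring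
      rw [this, hs2, hun]; linarith [h8T]
    rw [← e, Real.sqrt_sq (by positivity)]
  have hx14 : 1 < 4 * x ^ 2 := by nlinarith [h8T, hD, hn]
  -- Part 1 : G at sqrt n is nonpositive
  have hGn : G n T c σ u ≤ 0 := by
    unfold G
    rw [hun, sub_nonpos, ← hxdef]
    have hbr : 4 * n / T * (T / n + 1) - 1 = 3 + 4 * n / T := by field_simp; ring
    rw [hbr]
    have hlow : (3 + 4 * n / T) * (2 * Real.sqrt 2) * x / (2 * x ^ 2 + 1) ≤
        Real.exp (T / (8 * n)) * (3 + 4 * n / T) * Real.sqrt (2 * Real.pi) * Erfc x := by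
      have ha : (2 / Real.sqrt Real.pi) * (Real.exp (-x ^ 2) * x / (2 * x ^ 2 + 1)) ≤ Erfc x :=
        mul_le_mul_of_nonneg_left (erfc_integral_lb x) (by positivity)
      have hb : (0:ℝ) ≤ Real.exp (T / (8 * n)) * (3 + 4 * n / T) * Real.sqrt (2 * Real.pi) := by
        positivity
      have hcmb := mul_le_mul_of_nonneg_left ha hb
      refine le_trans (le_of_eq ?_) hcmb
      have hexn : Real.exp (-x ^ 2) = Real.exp (-(T / (8 * n))) := by rw [hx2]
      have hEF : Real.exp (T / (8 * n)) * Real.exp (-(T / (8 * n))) = 1 := by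
        rw [← Real.exp_add]; simp
      have hsqrt2pi : Real.sqrt (2 * Real.pi) = Real.sqrt 2 * Real.sqrt Real.pi :=
        Real.sqrt_mul (by norm_num) _
      rw [hexn, hsqrt2pi]
      rw [show Real.exp (T / (8 * n)) * (3 + 4 * n / T) * (Real.sqrt 2 * Real.sqrt Real.pi) *
          (2 / Real.sqrt Real.pi * (Real.exp (-(T / (8 * n))) * x / (2 * x ^ 2 + 1))) =
          (Real.exp (T / (8 * n)) * Real.exp (-(T / (8 * n)))) *
            ((3 + 4 * n / T) * (2 * Real.sqrt 2) * x / (2 * x ^ 2 + 1)) *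
            (Real.sqrt Real.pi / Real.sqrt Real.pi) from by ring, hEF, div_self hπ.ne']
      ring
    have hc1 : σ ^ 2 ≤ c * (n * T) := by
      rw [ge_iff_le, div_le_iff₀ hc] at h1; linarith
    have hstep1 := aux_step1 n T c σ hn hT hc hσ hD hc1
    have hstep2 := aux_step2 n T u x hn hT hupos hxpos hD h8T hs2 hveq
    calc 4 * u / Real.sqrt T *
        (4 * n * T / ((T - 2 * n) * n) - 1 - c * (16 * n * T * n) / (σ ^ 2 * (T - 2 * n)))
        ≤ 4 * u / Real.sqrt T * ((3 * T - 14 * n) / (T - 2 * n)) :=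
          mul_le_mul_of_nonneg_left hstep1 (by positivity)
      _ ≤ (3 + 4 * n / T) * (2 * Real.sqrt 2) * x / (2 * x ^ 2 + 1) := hstep2
      _ ≤ _ := hlow
  -- Part 2 : G is nonnegative somewhere far out
  set K := 4 * T / ((T - 2 * n) * n) - c * (16 * T * n) / (σ ^ 2 * (T - 2 * n)) with hKdef
  have hK : 0 < K := by
    rw [hKdef]; exact aux_K n T c σ hn hT hc hσ hD h3
  clear_value K
  set R0 := Real.exp (T / (8 * n)) * (4 / T * (T / n + 1)) * Real.sqrt (2 * Real.pi) with hR0def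
  have hR0pos : 0 < R0 := by
    rw [hR0def]
    have : (0:ℝ) < Real.sqrt (2 * Real.pi) := Real.sqrt_pos.mpr (by positivity)
    positivity
  clear_value R0
  set P := 4 * K / Real.sqrt T with hPdef
  set Q := 4 / Real.sqrt T with hQdef
  have hP : 0 < P := by rw [hPdef]; positivity
  have hQ : 0 < Q := by rw [hQdef]; positivity
  clear_value P Q
  set α₀ := max u ((Q + R0) / P + 1) with hadef
  have hα₀n : u ≤ α₀ := le_max_left _ _
  have hα₀big : (Q + R0) / P + 1 ≤ α₀ := le_max_right _ _
  clear_value α₀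
  have hα₀1 : 1 ≤ α₀ := by
    have : (0:ℝ) ≤ (Q + R0) / P := by positivity
    linarith
  have hα₀pos : (0:ℝ) < α₀ := lt_of_lt_of_le one_pos hα₀1
  have hα₀sq : n ≤ α₀ ^ 2 := by nlinarith [hun, hupos, hα₀n]
  have hG0 : 0 ≤ G n T c σ α₀ := by
    unfold G
    set y := Real.sqrt (T / (8 * α₀ ^ 2)) with hydef
    have hy0 : 0 ≤ y := Real.sqrt_nonneg _
    have hterm1 : 4 * α₀ / Real.sqrt T *
        (4 * α₀ ^ 2 * T / ((T - 2 * n) * n) - 1 -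
          c * (16 * α₀ ^ 2 * T * n) / (σ ^ 2 * (T - 2 * n))) = P * α₀ ^ 3 - Q * α₀ := by
      rw [hPdef, hQdef, hKdef]; ring
    have hterm2 : Real.exp (T / (8 * α₀ ^ 2)) * (4 * α₀ ^ 2 / T * (T / n + 1) - 1) *
        Real.sqrt (2 * Real.pi) * Erfc y ≤ R0 * α₀ ^ 2 := by
      have hexp : Real.exp (T / (8 * α₀ ^ 2)) ≤ Real.exp (T / (8 * n)) := by
        apply Real.exp_le_exp.mpr
        apply div_le_div_of_nonneg_left hT.le (by positivity)
        linarith [hα₀sq]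
      have heq : 4 * α₀ ^ 2 / T * (T / n + 1) = 4 / T * (T / n + 1) * α₀ ^ 2 := by ring
      have hbr2 : 4 * α₀ ^ 2 / T * (T / n + 1) - 1 ≤ 4 / T * (T / n + 1) * α₀ ^ 2 := by
        rw [heq]; linarith
      rcases le_or_gt (4 * α₀ ^ 2 / T * (T / n + 1) - 1) 0 with hbn | hbp
      · have h8 : Real.exp (T / (8 * α₀ ^ 2)) * (4 * α₀ ^ 2 / T * (T / n + 1) - 1) ≤ 0 :=
          mul_nonpos_of_nonneg_of_nonpos (Real.exp_pos _).le hbn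
        have h9 := mul_nonpos_of_nonpos_of_nonneg h8 (Real.sqrt_nonneg (2 * Real.pi))
        have h10 := mul_nonpos_of_nonpos_of_nonneg h9 (erfc_nonneg y)
        have h11 : (0:ℝ) ≤ R0 * α₀ ^ 2 := by positivity
        linarith [h10, h11]
      · calc Real.exp (T / (8 * α₀ ^ 2)) * (4 * α₀ ^ 2 / T * (T / n + 1) - 1) *
            Real.sqrt (2 * Real.pi) * Erfc y
            ≤ Real.exp (T / (8 * n)) * (4 / T * (T / n + 1) * α₀ ^ 2) *
              Real.sqrt (2 * Real.pi) * 1 := by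
              gcongr <;> first
                | exact erfc_nonneg y
                | exact erfc_le_one hy0
                | exact hexp
                | exact hbr2
          _ = R0 * α₀ ^ 2 := by rw [hR0def]; ring
    rw [hterm1]
    have h6 : Q + R0 + P ≤ P * α₀ := by
      have h7 := mul_le_mul_of_nonneg_left hα₀big hP.le
      have h8 : P * ((Q + R0) / P + 1) = Q + R0 + P := by field_simp
      linarith
    have h9 : 0 ≤ P * α₀ ^ 3 - Q * α₀ - R0 * α₀ ^ 2 :=
      aux_growth P Q R0 α₀ hP hQ hR0pos hα₀1 h6
    linarith [hterm2]
  -- IVT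
  have hcont : ContinuousOn (G n T c σ) (Set.Icc u α₀) := by
    unfold G
    have hc2 : ContinuousOn (fun α : ℝ => T / (8 * α ^ 2)) (Set.Icc u α₀) := by
      apply ContinuousOn.div continuousOn_const (by fun_prop)
      intro a ha
      have : 0 < a := lt_of_lt_of_le hupos ha.1
      positivity
    apply ContinuousOn.sub
    · apply Continuous.continuousOn; fun_prop
    · apply ContinuousOn.mul
      · apply ContinuousOn.mul
        · apply ContinuousOn.mul
          · exact Real.continuous_exp.comp_continuousOn hc2
          · apply Continuous.continuousOn; fun_prop
        · exact continuousOn_const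
      · exact erfc_continuous.comp_continuousOn (Real.continuous_sqrt.comp_continuousOn hc2)
  have hIVT := intermediate_value_Icc hα₀n hcont
  have h0mem : (0:ℝ) ∈ Set.Icc (G n T c σ u) (G n T c σ α₀) := ⟨hGn, hG0⟩
  obtain ⟨α, hαm, hα⟩ := hIVT h0mem
  exact ⟨α, hαm.1, hα⟩
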